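/- Let B be a Banach space, C ⊆ B a weakly compact convex subset, and T : B → B a linear contraction with T(C) ⊆ C. Then for every x ∈ C, the Cesàro averages (1/n)·Σ_{k=0}^{n−1} T^k x converge in norm to some y ∈ C with Ty = y. -/

import Mathlib

open Finset Filter Function Topology

/-! The Cesàro averages `Aₙ x` lie in `C`, so by weak compactness they have a weak cluster point
`y ∈ C`. Since `T (Aₙ x) - Aₙ x = (Tⁿ x - x) / n → 0` in norm, `y` is fixed by `T`. Since
`Aₙ x - x` lies in the range of `T - 1`, so does `y - x` up to weak closure, which for a subspace is
the norm closure (Mazur). On that closure the averages tend to `0` (on the range by telescoping,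
and the averaging operators are uniformly bounded), while on fixed points they are constant; hence
`Aₙ x = y - Aₙ (y - x) → y`. -/

theorem Convex.birkhoffAverage_mem {𝕜 E : Type*} [Field 𝕜] [LinearOrder 𝕜] [IsStrictOrderedRing 𝕜]
    [AddCommGroup E] [Module 𝕜 E] {s : Set E} (hs : Convex 𝕜 s) {f : E → E} (hf : Set.MapsTo f s s)
    {x : E} (hx : x ∈ s) {n : ℕ} (hn : n ≠ 0) : birkhoffAverage 𝕜 f id n x ∈ s := by
  rw [birkhoffAverage, birkhoffSum, smul_sum]
  refine hs.sum_mem (fun _ _ => by positivity) ?_ fun k _ => (hf.iterate k) hx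
  simp [hn]

theorem birkhoffAverage_sub_self_mem_range {R E : Type*} [DivisionRing R] [CharZero R]
    [AddCommGroup E] [Module R E] (f : E →ₗ[R] E) (x : E) {n : ℕ} (hn : n ≠ 0) :
    birkhoffAverage R f id n x - x ∈ LinearMap.range (f - 1) := by
  have iterate_sub_mem : ∀ k, f^[k] x - x ∈ LinearMap.range (f - 1) := by
    intro k
    induction k with
    | zero => simp
    | succ k ih =>
      rw [iterate_succ_apply', ← sub_add_sub_cancel _ (f^[k] x)]
      exact add_mem ⟨f^[k] x, rfl⟩ ih
  have : birkhoffAverage R f id n x - x = (n : R)⁻¹ • ∑ k ∈ range n, (f^[k] x - x) := by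
    simp only [birkhoffAverage, birkhoffSum, id, sum_sub_distrib, smul_sub, sum_const, card_range,
      ← Nat.cast_smul_eq_nsmul R, inv_smul_smul₀ (Nat.cast_ne_zero.2 hn : (n : R) ≠ 0)]
  rw [this]
  exact Submodule.smul_mem _ _ (Submodule.sum_mem _ fun k _ => iterate_sub_mem k)

namespace ContinuousLinearMap

variable {𝕜 E : Type*} [RCLike 𝕜] [NormedAddCommGroup E] [NormedSpace 𝕜 E]

theorem norm_iterate_apply_le {f : E →L[𝕜] E} (hf : ‖f‖ ≤ 1) (n : ℕ) (x : E) :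
    ‖f^[n] x‖ ≤ ‖x‖ := by
  induction n with
  | zero => rfl
  | succ n ih =>
    rw [iterate_succ_apply']
    exact (f.le_of_opNorm_le hf _).trans (by simpa using ih)

theorem apply_birkhoffAverage (f : E →L[𝕜] E) (n : ℕ) (x : E) :
    f (birkhoffAverage 𝕜 f id n x) = birkhoffAverage 𝕜 f id n (f x) := by
  simp [birkhoffAverage, birkhoffSum, map_sum, (Commute.iterate_self f _).eq]

theorem tendsto_apply_birkhoffAverage_sub {f : E →L[𝕜] E} (hf : ‖f‖ ≤ 1) (x : E) :
    Tendsto (fun n => f (birkhoffAverage 𝕜 f id n x) - birkhoffAverage 𝕜 f id n x) atTop (𝓝 0) := by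
  simp only [apply_birkhoffAverage]
  refine tendsto_birkhoffAverage_apply_sub_birkhoffAverage 𝕜 ?_
  exact isBounded_iff_forall_norm_le.2 ⟨‖x‖, Set.forall_mem_range.2 (norm_iterate_apply_le hf · x)⟩

theorem tendsto_birkhoffAverage_zero_of_mem_closure_range {f : E →L[𝕜] E} (hf : ‖f‖ ≤ 1) {z : E}
    (hz : z ∈ closure (LinearMap.range ((f : E →ₗ[𝕜] E) - 1) : Set E)) :
    Tendsto (birkhoffAverage 𝕜 f id · z) atTop (𝓝 0) := by
  have hclosed : IsClosed {z | Tendsto (birkhoffAverage 𝕜 f id · z) atTop (𝓝 0)} :=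
    isClosed_setOfPred_tendsto_birkhoffAverage 𝕜 (f.lipschitz.weaken hf) uniformContinuous_id
      continuous_const
  refine closure_minimal (Set.forall_mem_range.2 fun w => ?_) hclosed hz
  simpa [birkhoffAverage, birkhoffSum, sum_sub_distrib, smul_sub, iterate_map_sub,
    (Commute.iterate_self f _).eq] using tendsto_apply_birkhoffAverage_sub hf w

theorem tendsto_birkhoffAverage_of_sub_mem_closure_range {f : E →L[𝕜] E} (hf : ‖f‖ ≤ 1) {x y : E}
    (hy : IsFixedPt f y) (hxy : y - x ∈ closure (LinearMap.range ((f : E →ₗ[𝕜] E) - 1) : Set E)) :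
    Tendsto (birkhoffAverage 𝕜 f id · x) atTop (𝓝 y) := by
  simpa [birkhoffAverage, birkhoffSum, sum_sub_distrib, smul_sub, iterate_map_sub] using
    (hy.tendsto_birkhoffAverage 𝕜 id).sub (tendsto_birkhoffAverage_zero_of_mem_closure_range hf hxy)

section Weak

variable {E : Type*} [NormedAddCommGroup E] [NormedSpace ℝ E] {f : E →L[ℝ] E} {x y : E}

theorem isFixedPt_of_mapClusterPt_toWeakSpace (hf : ‖f‖ ≤ 1)
    (hy : MapClusterPt (toWeakSpace ℝ E y) atTop (toWeakSpace ℝ E <| birkhoffAverage ℝ f id · x)) :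
    IsFixedPt f y := by
  let φ : WeakSpace ℝ E →L[ℝ] WeakSpace ℝ E := WeakSpace.map f - ContinuousLinearMap.id ℝ _
  have hcluster := hy.continuousAt_comp φ.continuous.continuousAt
  have htendsto : Tendsto (φ ∘ (toWeakSpace ℝ E <| birkhoffAverage ℝ f id · x)) atTop (𝓝 0) :=
    (((toWeakSpaceCLM ℝ E).continuous.tendsto 0).comp
      (tendsto_apply_birkhoffAverage_sub hf x)).congr fun _ => rfl
  have hzero : φ (toWeakSpace ℝ E y) = 0 := eq_of_nhds_neBot (hcluster.clusterPt.mono htendsto)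
  exact sub_eq_zero.1 hzero

theorem sub_mem_closure_range_of_mapClusterPt_toWeakSpace
    (hy : MapClusterPt (toWeakSpace ℝ E y) atTop (toWeakSpace ℝ E <| birkhoffAverage ℝ f id · x)) :
    y - x ∈ closure (LinearMap.range ((f : E →ₗ[ℝ] E) - 1) : Set E) := by
  set p := LinearMap.range ((f : E →ₗ[ℝ] E) - 1)
  have hcluster := hy.continuousAt_comp (continuous_sub_right (toWeakSpace ℝ E x)).continuousAt
  have hmem : toWeakSpace ℝ E y - toWeakSpace ℝ E x ∈ closure (toWeakSpace ℝ E '' p) :=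
    isClosed_closure.mem_of_mapClusterPt hcluster <| (eventually_ne_atTop 0).mono fun n hn =>
      subset_closure ⟨_, birkhoffAverage_sub_self_mem_range (f : E →ₗ[ℝ] E) x hn, rfl⟩
  rw [← p.convex.toWeakSpace_closure ℝ] at hmem
  obtain ⟨z, hz, hzy⟩ := hmem
  rwa [← (toWeakSpace ℝ E).injective (hzy.trans (map_sub _ y x).symm)]

end Weak

end ContinuousLinearMap

theorem mean_ergodic_weakly_compact_general {B : Type*} [NormedAddCommGroup B]
    [NormedSpace ℝ B]
    (T : B →L[ℝ] B) (hT : ‖T‖ ≤ 1)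
    (C : Set B) (hconv : Convex ℝ C)
    (hcomp : IsCompact (toWeakSpace ℝ B '' C))
    (hinv : ∀ x ∈ C, T x ∈ C) :
    ∀ x ∈ C, ∃ y ∈ C, T y = y ∧
      Tendsto (fun n : ℕ => (n : ℝ)⁻¹ • ∑ k ∈ range n, (T ^ k) x)
        atTop (nhds y) := by
  intro x hx
  have hmem :
      ∀ᶠ n in atTop, toWeakSpace ℝ B (birkhoffAverage ℝ T id n x) ∈ toWeakSpace ℝ B '' C :=
    (eventually_ne_atTop 0).mono fun n hn => ⟨_, hconv.birkhoffAverage_mem hinv hx hn, rfl⟩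
  obtain ⟨_, ⟨y, hyC, rfl⟩, hy⟩ := hcomp.exists_mapClusterPt_of_frequently hmem.frequently
  have hfix := T.isFixedPt_of_mapClusterPt_toWeakSpace hT hy
  refine ⟨y, hyC, hfix, ?_⟩
  simpa [birkhoffAverage, birkhoffSum] using
    T.tendsto_birkhoffAverage_of_sub_mem_closure_range hT hfix
      (T.sub_mem_closure_range_of_mapClusterPt_toWeakSpace hy)

/-- Mean ergodic theorem on a weakly compact convex set: if `T` is a linear
contraction of a Banach space `B`, `C` is a nonempty convex subset of `B`,
compact in the weak topology, with `T '' C ⊆ C`, then for every `x ∈ C` the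
Cesàro averages of `T` at `x` converge in norm to a `T`-fixed point of `C`. -/
theorem mean_ergodic_weakly_compact {B : Type*} [NormedAddCommGroup B]
    [NormedSpace ℝ B] [CompleteSpace B]
    (T : B →L[ℝ] B) (hT : ‖T‖ ≤ 1)
    (C : Set B) (hne : C.Nonempty) (hconv : Convex ℝ C)
    (hcomp : IsCompact (toWeakSpace ℝ B '' C))
    (hinv : ∀ x ∈ C, T x ∈ C) :
    ∀ x ∈ C, ∃ y ∈ C, T y = y ∧
      Tendsto (fun n : ℕ => (n : ℝ)⁻¹ • ∑ k ∈ range n, (T ^ k) x)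
        atTop (nhds y) :=
  mean_ergodic_weakly_compact_general T hT C hconv hcomp hinv
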